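/- arXiv:2103.09223 — 2 statements merged into one kernel-verified Lean document; each statement's English description precedes it below -/
import Mathlib

section
/- Let n ≥ 3, let V : Fin n → Finset ℝ² with each V i nonempty, set U i = convexHull ℝ (V i : Set ℝ²), and fix p1 ∈ U 0 and pn ∈ U (n−1). Then the value max over interior indices i (0 < i < n−1) and over v ∈ V i of infDist v (segment ℝ p1 pn) is the greatest element of the set { hausdorffDist (C(π)) (segment ℝ p1 pn) | π : Fin n → ℝ², (∀ i, π i ∈ U i), π 0 = p1, π (n−1) = pn }. -/
open Metric

/-- The polygonal curve on vertices `p 0, …, p (n-1)`: the union of the segments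
between consecutive vertices. -/
noncomputable def polyCurve {n : ℕ} (p : Fin n → EuclideanSpace ℝ (Fin 2)) :
    Set (EuclideanSpace ℝ (Fin 2)) :=
  ⋃ i : Fin (n - 1),
    segment ℝ (p ⟨i.1, by have := i.isLt; omega⟩) (p ⟨i.1 + 1, by have := i.isLt; omega⟩)

/-!
Let `M` be the largest distance from a vertex of an interior region to `[p1, pn]`. The sublevel
sets of `infDist · [p1, pn]` are convex, so for every realisation they contain the interior
regions and then the whole curve `C`. Conversely each `x ∈ [p1, pn]` is the foot of the
perpendicular from some `y ∈ C`, because `C` is connected and runs from `p1` to `pn`; hence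
`infDist x C ≤ dist x y ≤ infDist y [p1, pn] ≤ M`. So every Hausdorff distance is at most `M`,
and `M` is attained by a realisation through a vertex at distance `M`.
-/

open RealInnerProductSpace Set

local notation "ℝ²" => EuclideanSpace ℝ (Fin 2)

lemma mem_cthickening_iff_infDist_le {X : Type*} [PseudoMetricSpace X] {s : Set X}
    (hs : s.Nonempty) {δ : ℝ} (hδ : 0 ≤ δ) {x : X} :
    x ∈ cthickening δ s ↔ infDist x s ≤ δ := by
  rw [mem_cthickening_iff, infDist]
  exact ENNReal.le_ofReal_iff_toReal_le (infEDist_ne_top hs) hδ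

section InnerProductSpace

variable {F : Type*} [NormedAddCommGroup F] [InnerProductSpace ℝ F]

lemma infDist_le_of_mem_convexHull {s T : Set F} (hs : Convex ℝ s) (hs₀ : s.Nonempty) {M : ℝ}
    (hT : ∀ v ∈ T, infDist v s ≤ M) {z : F} (hz : z ∈ convexHull ℝ T) :
    infDist z s ≤ M := by
  obtain ⟨v, hv⟩ := convexHull_nonempty_iff.1 ⟨z, hz⟩
  have hM : 0 ≤ M := infDist_nonneg.trans (hT v hv)
  refine (mem_cthickening_iff_infDist_le hs₀ hM).1 (convexHull_min ?_ (hs.cthickening M) hz)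
  exact fun v hv => (mem_cthickening_iff_infDist_le hs₀ hM).2 (hT v hv)

lemma infDist_le_of_mem_segment {s : Set F} (hs : Convex ℝ s) (hs₀ : s.Nonempty) {M : ℝ}
    {a b z : F} (ha : infDist a s ≤ M) (hb : infDist b s ≤ M) (hz : z ∈ segment ℝ a b) :
    infDist z s ≤ M := by
  rw [← convexHull_pair] at hz
  refine infDist_le_of_mem_convexHull hs hs₀ ?_ hz
  rintro v (rfl | rfl) <;> assumption

lemma dist_le_dist_add_smul_of_inner_eq_zero {x y u : F} (h : ⟪y - x, u⟫ = 0) (r : ℝ) :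
    dist y x ≤ dist y (x + r • u) := by
  have hpyth : ‖y - (x + r • u)‖ ^ 2 = ‖y - x‖ ^ 2 + ‖r • u‖ ^ 2 := by
    rw [show y - (x + r • u) = (y - x) - r • u by abel, norm_sub_sq_real,
      real_inner_smul_right, h]
    ring
  rw [dist_eq_norm, dist_eq_norm]
  exact pow_le_pow_iff_left₀ (norm_nonneg _) (norm_nonneg _) two_ne_zero |>.1
    (by rw [hpyth]; nlinarith [sq_nonneg ‖r • u‖])

lemma dist_le_infDist_segment_of_inner_eq_zero {a b x y : F} (hx : x ∈ segment ℝ a b)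
    (h : ⟪y - x, b - a⟫ = 0) : dist y x ≤ infDist y (segment ℝ a b) := by
  refine (le_infDist ⟨a, left_mem_segment ℝ a b⟩).2 fun z hz => ?_
  rw [segment_eq_image'] at hx hz
  obtain ⟨s, -, rfl⟩ := hx
  obtain ⟨t, -, rfl⟩ := hz
  convert dist_le_dist_add_smul_of_inner_eq_zero h (t - s) using 2
  module

lemma infDist_vertex_segment_le {n : ℕ} (hn : 0 < n) {π : Fin n → F} {T : Fin n → Set F}
    {a b : F} {M : ℝ} (hM : 0 ≤ M) (ha : π ⟨0, hn⟩ = a) (hb : π ⟨n - 1, by omega⟩ = b)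
    (hπ : ∀ j, π j ∈ convexHull ℝ (T j))
    (hT : ∀ j : Fin n, 0 < j.1 → j.1 < n - 1 → ∀ v ∈ T j, infDist v (segment ℝ a b) ≤ M)
    (j : Fin n) : infDist (π j) (segment ℝ a b) ≤ M := by
  by_cases hj : j.1 = 0
  · rw [show j = ⟨0, hn⟩ from Fin.ext hj, ha, infDist_zero_of_mem (left_mem_segment ℝ a b)]
    exact hM
  by_cases hj' : j.1 = n - 1
  · rw [show j = ⟨n - 1, by omega⟩ from Fin.ext hj', hb,
      infDist_zero_of_mem (right_mem_segment ℝ a b)]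
    exact hM
  exact infDist_le_of_mem_convexHull (convex_segment a b) ⟨a, left_mem_segment ℝ a b⟩
    (hT j (by omega) (by omega)) (hπ j)

end InnerProductSpace

section PolyCurve

variable {n : ℕ} (p : Fin n → ℝ²)

lemma isPreconnected_polyCurve : IsPreconnected (polyCurve p) := by
  refine IsPreconnected.iUnion_of_chain (fun i => (convex_segment _ _).isPreconnected) fun i => ?_
  by_cases hi : IsMax i
  · rw [hi.succ_eq, inter_self]
    exact ⟨_, left_mem_segment ℝ _ _⟩
  · have hsucc : ((Order.succ i : Fin (n - 1)) : ℕ) = i + 1 :=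
      (Nat.covBy_iff_add_one_eq.1 (Fin.covBy_iff.1 (Order.covBy_succ_of_not_isMax hi))).symm
    refine ⟨_, right_mem_segment ℝ _ _, ?_⟩
    convert left_mem_segment ℝ _ _ using 2
    exact Fin.ext hsucc.symm

lemma mem_polyCurve (hn : 2 ≤ n) (j : Fin n) : p j ∈ polyCurve p := by
  by_cases hj : j.1 < n - 1
  · exact mem_iUnion.2 ⟨⟨j, hj⟩, left_mem_segment ℝ _ _⟩
  · refine mem_iUnion.2 ⟨⟨n - 2, by omega⟩, ?_⟩
    rw [show j = ⟨n - 2 + 1, by omega⟩ from Fin.ext (by simp only; omega)]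
    exact right_mem_segment ℝ _ _

lemma isBounded_polyCurve : Bornology.IsBounded (polyCurve p) :=
  Bornology.isBounded_iUnion.2 fun _ =>
    isBounded_closedBall.subset (segment_subset_closedBall_left _ _)

variable {p}

lemma infDist_le_of_mem_polyCurve {s : Set ℝ²} (hs : Convex ℝ s) (hs₀ : s.Nonempty) {M : ℝ}
    (hp : ∀ j, infDist (p j) s ≤ M) {x : ℝ²} (hx : x ∈ polyCurve p) : infDist x s ≤ M := by
  obtain ⟨i, hi⟩ := mem_iUnion.1 hx
  exact infDist_le_of_mem_segment hs hs₀ (hp _) (hp _) hi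

lemma exists_mem_polyCurve_inner_eq_zero (hn : 2 ≤ n) {a b x : ℝ²}
    (ha : p ⟨0, by omega⟩ = a) (hb : p ⟨n - 1, by omega⟩ = b) (hx : x ∈ segment ℝ a b) :
    ∃ y ∈ polyCurve p, ⟪y - x, b - a⟫ = 0 := by
  rw [segment_eq_image'] at hx
  obtain ⟨s, ⟨hs₀, hs₁⟩, rfl⟩ := hx
  -- the height `⟪· - x, b - a⟫` is `≤ 0` at `a` and `≥ 0` at `b`
  have hheight : Icc ⟪a - (a + s • (b - a)), b - a⟫ ⟪b - (a + s • (b - a)), b - a⟫ ⊆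
      (fun y => ⟪y - (a + s • (b - a)), b - a⟫) '' polyCurve p := by
    have ha' : a ∈ polyCurve p := ha ▸ mem_polyCurve p hn _
    have hb' : b ∈ polyCurve p := hb ▸ mem_polyCurve p hn _
    exact (isPreconnected_polyCurve p).intermediate_value ha' hb'
      (f := fun y => ⟪y - (a + s • (b - a)), b - a⟫) (by fun_prop)
  refine hheight ⟨?_, ?_⟩
  · rw [show a - (a + s • (b - a)) = (-s) • (b - a) by module, real_inner_smul_left]
    nlinarith [real_inner_self_nonneg (x := b - a)]
  · rw [show b - (a + s • (b - a)) = (1 - s) • (b - a) by module, real_inner_smul_left]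
    nlinarith [real_inner_self_nonneg (x := b - a)]

lemma hausdorffDist_polyCurve_segment_le (hn : 2 ≤ n) {a b : ℝ²} {M : ℝ}
    (ha : p ⟨0, by omega⟩ = a) (hb : p ⟨n - 1, by omega⟩ = b)
    (hp : ∀ j, infDist (p j) (segment ℝ a b) ≤ M) :
    hausdorffDist (polyCurve p) (segment ℝ a b) ≤ M := by
  have hseg₀ : (segment ℝ a b).Nonempty := ⟨a, left_mem_segment ℝ a b⟩
  have hcurve : ∀ y ∈ polyCurve p, infDist y (segment ℝ a b) ≤ M :=
    fun y => infDist_le_of_mem_polyCurve (convex_segment a b) hseg₀ hp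
  refine hausdorffDist_le_of_infDist (infDist_nonneg.trans (hp ⟨0, by omega⟩)) hcurve
    fun x hx => ?_
  obtain ⟨y, hy, hperp⟩ := exists_mem_polyCurve_inner_eq_zero hn ha hb hx
  calc infDist x (polyCurve p) ≤ dist y x := dist_comm x y ▸ infDist_le_dist_of_mem hy
    _ ≤ infDist y (segment ℝ a b) := dist_le_infDist_segment_of_inner_eq_zero hx hperp
    _ ≤ M := hcurve y hy

lemma infDist_le_hausdorffDist_polyCurve (hn : 2 ≤ n) (j : Fin n) (a b : ℝ²) :
    infDist (p j) (segment ℝ a b) ≤ hausdorffDist (polyCurve p) (segment ℝ a b) :=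
  infDist_le_hausdorffDist_of_mem (mem_polyCurve p hn j) <|
    hausdorffEDist_ne_top_of_nonempty_of_bounded ⟨_, mem_polyCurve p hn j⟩
      ⟨a, left_mem_segment ℝ a b⟩ (isBounded_polyCurve p)
      (isBounded_closedBall.subset (segment_subset_closedBall_left a b))

end PolyCurve

lemma exists_realisation_through {E : Type*} {n : ℕ} (U : Fin n → Set E)
    (hU : ∀ j, (U j).Nonempty) {i : Fin n} (hi₀ : 0 < i.1) (hi : i.1 < n - 1) {v a b : E}
    (hv : v ∈ U i) (ha : a ∈ U ⟨0, by omega⟩) (hb : b ∈ U ⟨n - 1, by omega⟩) :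
    ∃ π : Fin n → E, (∀ j, π j ∈ U j) ∧ π ⟨0, by omega⟩ = a ∧ π ⟨n - 1, by omega⟩ = b ∧
      π i = v := by
  classical
  refine ⟨fun j => if j = i then v else if j.1 = 0 then a else if j.1 = n - 1 then b
    else (hU j).some, fun j => ?_, ?_, ?_, if_pos rfl⟩
  · dsimp only
    split_ifs with h₁ h₂ h₃
    · exact h₁ ▸ hv
    · exact (Fin.ext h₂ : j = ⟨0, j.pos⟩) ▸ ha
    · exact (Fin.ext h₃ : j = ⟨n - 1, by omega⟩) ▸ hb
    · exact (hU j).some_mem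
  · simp [Fin.ext_iff, hi₀.ne]
  · have : n - 1 ≠ 0 := by omega
    simp [Fin.ext_iff, hi.ne', this]

/-- PCCSs, fixed endpoints: the greatest Hausdorff distance between a realisation and
the one-segment simplification is the maximum, over interior indices `i` and vertices
`v ∈ V i`, of the distance from `v` to the segment. -/
theorem hausdorff_pccs_fixed_endpoints
    (n : ℕ) (hn : 3 ≤ n) (V : Fin n → Finset (EuclideanSpace ℝ (Fin 2)))
    (hV : ∀ i, (V i).Nonempty)
    (p1 pn : EuclideanSpace ℝ (Fin 2))
    (hp1 : p1 ∈ convexHull ℝ ((V ⟨0, by omega⟩ : Finset (EuclideanSpace ℝ (Fin 2))) : Set (EuclideanSpace ℝ (Fin 2))))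
    (hpn : pn ∈ convexHull ℝ ((V ⟨n - 1, by omega⟩ : Finset (EuclideanSpace ℝ (Fin 2))) : Set (EuclideanSpace ℝ (Fin 2)))) :
    ∃ M : ℝ,
      IsGreatest {x : ℝ | ∃ i : Fin n, 0 < i.1 ∧ i.1 < n - 1 ∧
        ∃ v ∈ V i, x = Metric.infDist v (segment ℝ p1 pn)} M ∧
      IsGreatest {d : ℝ | ∃ π : Fin n → EuclideanSpace ℝ (Fin 2),
        (∀ i, π i ∈ convexHull ℝ ((V i : Finset (EuclideanSpace ℝ (Fin 2))) : Set (EuclideanSpace ℝ (Fin 2)))) ∧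
        π ⟨0, by omega⟩ = p1 ∧ π ⟨n - 1, by omega⟩ = pn ∧
        d = Metric.hausdorffDist (polyCurve π) (segment ℝ p1 pn)} M := by
  set S := {x : ℝ | ∃ i : Fin n, 0 < i.1 ∧ i.1 < n - 1 ∧
    ∃ v ∈ V i, x = infDist v (segment ℝ p1 pn)}
  obtain ⟨M, hM, hM_max⟩ : ∃ M, IsGreatest S M := by
    have hS : S.Finite := (finite_iUnion fun i => (V i).finite_toSet.image
      (infDist · (segment ℝ p1 pn))).subset fun x ⟨i, _, _, v, hv, hx⟩ =>
        mem_iUnion.2 ⟨i, v, hv, hx.symm⟩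
    obtain ⟨v, hv⟩ := hV ⟨1, by omega⟩
    exact hS.isCompact.exists_isGreatest
      ⟨_, ⟨1, by omega⟩, one_pos, by show 1 < n - 1; omega, v, hv, rfl⟩
  obtain ⟨i₀, hi₀, hi₀', v₀, hv₀, hM_eq⟩ := hM
  have hM₀ : 0 ≤ M := hM_eq ▸ infDist_nonneg
  have hvertex : ∀ π : Fin n → ℝ², (∀ i, π i ∈ convexHull ℝ (V i : Set ℝ²)) →
      π ⟨0, by omega⟩ = p1 → π ⟨n - 1, by omega⟩ = pn →
      ∀ j, infDist (π j) (segment ℝ p1 pn) ≤ M := fun π hπ h₀ h₁ =>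
    infDist_vertex_segment_le (by omega) hM₀ h₀ h₁ hπ fun j hj hj' v hv =>
      hM_max ⟨j, hj, hj', v, hv, rfl⟩
  obtain ⟨π₀, hπ₀, h₀, h₁, hπ₀i₀⟩ := exists_realisation_through
    (fun i => convexHull ℝ (V i : Set ℝ²)) (fun i => convexHull_nonempty_iff.2 (hV i).to_set)
    hi₀ hi₀' (subset_convexHull ℝ _ hv₀) hp1 hpn
  refine ⟨M, ⟨⟨i₀, hi₀, hi₀', v₀, hv₀, hM_eq⟩, hM_max⟩, ⟨π₀, hπ₀, h₀, h₁, le_antisymm ?_ ?_⟩, ?_⟩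
  · exact hM_eq ▸ hπ₀i₀ ▸ infDist_le_hausdorffDist_polyCurve (by omega) i₀ p1 pn
  · exact hausdorffDist_polyCurve_segment_le (by omega) h₀ h₁ (hvertex π₀ hπ₀ h₀ h₁)
  · rintro d ⟨π, hπ, h₀, h₁, rfl⟩
    exact hausdorffDist_polyCurve_segment_le (by omega) h₀ h₁ (hvertex π hπ h₀ h₁)
end

section
/- Let c ∈ ℝ², r ≥ 0, and a, b ∈ ℝ². The maximum over the closed disk of radius r around c of the distance to the segment ab equals the distance from the centre plus the radius: IsGreatest ((fun p => Metric.infDist p (segment ℝ a b)) '' Metric.closedBall c r) (Metric.infDist c (segment ℝ a b) + r). -/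
/-!
The distance to a set is 1-Lipschitz, so on the disk it is at most `infDist c S + r`. Equality
is attained by moving away from a nearest point `q ∈ S` of `c` along an outer unit normal of the
convex set `S` at `q`: the normalized `c - q` when `c ∉ S`, and a unit vector perpendicular to
the segment when `c ∈ S` (this needs dimension at least `2`). Along such a ray `q` remains
the nearest point of `S`.
-/

open Metric RealInnerProductSpace

section

variable {E : Type*} [NormedAddCommGroup E] [InnerProductSpace ℝ E] {S : Set E}

theorem Convex.infDist_eq_dist_iff_inner_le_zero (hS : Convex ℝ S) {q : E} (hq : q ∈ S)
    (x : E) : infDist x S = dist x q ↔ ∀ s ∈ S, ⟪x - q, s - q⟫ ≤ 0 := by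
  simp only [infDist_eq_iInf, dist_eq_norm]
  rw [eq_comm]
  exact norm_eq_iInf_iff_real_inner_le_zero hS hq

theorem Convex.infDist_add_smul_of_inner_le_zero (hS : Convex ℝ S) {q v : E} (hq : q ∈ S)
    (hv : ‖v‖ = 1) (hnormal : ∀ s ∈ S, ⟪v, s - q⟫ ≤ 0) {t : ℝ} (ht : 0 ≤ t) :
    infDist (q + t • v) S = t := by
  have hdist : dist (q + t • v) q = t := by
    rw [dist_eq_norm, add_sub_cancel_left, norm_smul, hv, mul_one, Real.norm_of_nonneg ht]
  rw [(hS.infDist_eq_dist_iff_inner_le_zero hq _).mpr, hdist]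
  intro s hs
  rw [add_sub_cancel_left, real_inner_smul_left]
  exact mul_nonpos_of_nonneg_of_nonpos ht (hnormal s hs)

theorem Convex.exists_unit_normal_eq_add_infDist_smul (hS : Convex ℝ S) (hSc : IsComplete S)
    (hne : S.Nonempty) (hnormal : ∀ q ∈ S, ∃ v : E, ‖v‖ = 1 ∧ ∀ s ∈ S, ⟪v, s - q⟫ ≤ 0)
    (c : E) : ∃ q ∈ S, ∃ v : E, ‖v‖ = 1 ∧ (∀ s ∈ S, ⟪v, s - q⟫ ≤ 0) ∧
      c = q + infDist c S • v := by
  obtain ⟨q, hq, hmin⟩ := exists_norm_eq_iInf_of_complete_convex hne hSc hS c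
  have hdist : infDist c S = ‖c - q‖ := by
    rw [infDist_eq_iInf, hmin]
    simp only [dist_eq_norm]
  by_cases hcq : c = q
  · obtain ⟨v, hv, hvS⟩ := hnormal q hq
    exact ⟨q, hq, v, hv, hvS, by rw [hdist, hcq, sub_self, norm_zero, zero_smul, add_zero]⟩
  have hpos : 0 < ‖c - q‖ := norm_pos_iff.mpr (sub_ne_zero.mpr hcq)
  refine ⟨q, hq, ‖c - q‖⁻¹ • (c - q), ?_, fun s hs => ?_, ?_⟩
  · rw [norm_smul, norm_inv, norm_norm, inv_mul_cancel₀ hpos.ne']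
  · rw [real_inner_smul_left]
    refine mul_nonpos_of_nonneg_of_nonpos (inv_nonneg.mpr hpos.le) ?_
    exact (hS.infDist_eq_dist_iff_inner_le_zero hq c).mp (by rw [hdist, dist_eq_norm]) s hs
  · rw [hdist, smul_smul, mul_inv_cancel₀ hpos.ne', one_smul, add_sub_cancel]

theorem Convex.isGreatest_infDist_image_closedBall (hS : Convex ℝ S) (hSc : IsComplete S)
    (hne : S.Nonempty) (hnormal : ∀ q ∈ S, ∃ v : E, ‖v‖ = 1 ∧ ∀ s ∈ S, ⟪v, s - q⟫ ≤ 0)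
    (c : E) {r : ℝ} (hr : 0 ≤ r) :
    IsGreatest ((fun p => infDist p S) '' closedBall c r) (infDist c S + r) := by
  refine ⟨?_, ?_⟩
  · obtain ⟨q, hq, v, hv, hvS, hc⟩ :=
      hS.exists_unit_normal_eq_add_infDist_smul hSc hne hnormal c
    refine ⟨q + (infDist c S + r) • v, ?_, ?_⟩
    · rw [mem_closedBall, dist_eq_norm]
      nth_rewrite 2 [hc]
      rw [add_sub_add_left_eq_sub, ← sub_smul, add_sub_cancel_left, norm_smul, hv, mul_one,
        Real.norm_of_nonneg hr]
    · exact hS.infDist_add_smul_of_inner_le_zero hq hv hvS (add_nonneg infDist_nonneg hr)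
  · rintro _ ⟨p, hp, rfl⟩
    exact infDist_le_infDist_add_dist.trans (add_le_add_right (mem_closedBall.mp hp) _)

theorem exists_norm_eq_one_inner_eq_zero [FiniteDimensional ℝ E]
    (hE : 2 ≤ Module.finrank ℝ E) (w : E) : ∃ v : E, ‖v‖ = 1 ∧ ⟪v, w⟫ = 0 := by
  have hspan : Module.finrank ℝ (ℝ ∙ w) ≤ 1 := by
    simpa using finrank_span_le_card ({w} : Set E)
  have hne : (ℝ ∙ w)ᗮ ≠ ⊥ := by
    intro hbot
    have := (ℝ ∙ w).finrank_add_finrank_orthogonal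
    rw [hbot, finrank_bot] at this
    omega
  obtain ⟨u, hu, hu0⟩ := Submodule.exists_mem_ne_zero_of_ne_bot hne
  refine ⟨‖u‖⁻¹ • u, ?_, ?_⟩
  · rw [norm_smul, norm_inv, norm_norm, inv_mul_cancel₀ (norm_ne_zero_iff.mpr hu0)]
  · rw [real_inner_smul_left, real_inner_comm,
      Submodule.mem_orthogonal_singleton_iff_inner_right.mp hu, mul_zero]

theorem inner_sub_eq_zero_of_mem_segment {v a b q s : E} (hv : ⟪v, b - a⟫ = 0)
    (hq : q ∈ segment ℝ a b) (hs : s ∈ segment ℝ a b) : ⟪v, s - q⟫ = 0 := by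
  rw [segment_eq_image'] at hq hs
  obtain ⟨θ, -, rfl⟩ := hq
  obtain ⟨θ', -, rfl⟩ := hs
  rw [add_sub_add_left_eq_sub, ← sub_smul, real_inner_smul_right, hv, mul_zero]

end

theorem max_dist_segment_over_ball
    (c a b : EuclideanSpace ℝ (Fin 2)) (r : ℝ) (hr : 0 ≤ r) :
    IsGreatest ((fun p => Metric.infDist p (segment ℝ a b)) '' Metric.closedBall c r)
      (Metric.infDist c (segment ℝ a b) + r) := by
  have hcompact : IsCompact (segment ℝ a b) := by
    rw [← convexHull_pair]
    exact (Set.toFinite _).isCompact_convexHull ℝ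
  obtain ⟨v, hv, hvab⟩ := exists_norm_eq_one_inner_eq_zero (by simp) (b - a)
  refine (convex_segment a b).isGreatest_infDist_image_closedBall hcompact.isComplete
    ⟨a, left_mem_segment ℝ a b⟩ (fun q hq => ⟨v, hv, fun s hs => ?_⟩) c hr
  exact (inner_sub_eq_zero_of_mem_segment hvab hq hs).le
end
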